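/- Fix integers m, d ≥ 1, k ≥ 1 and α ∈ (0,1]. Let Y be the set of maps f : ℝ^m → ℝ^d of class C^k such that [D^k f]_{α,K} < ∞ for every compact K ⊆ ℝ^m, where D^k f denotes the k-th iterated Fréchet derivative. For compact K set ‖f‖_{k+α,K} = sup_{x∈K} ‖f(x)‖ + max_{1≤j≤k} sup_{x∈K} ‖D^j f(x)‖ + [D^k f]_{α,K}. Then Y, endowed with the topology generated by the sets { g ∈ Y : ∀ t ∈ T, ‖f − g‖_{k+α,K_t} < ε_t } over all f ∈ Y, all locally finite families {K_t}_{t∈T} of compact subsets of ℝ^m and all families {ε_t}_{t∈T} of extended positive reals ε_t ∈ (0,∞] (the strong C^{k+α}-Whitney topology), is a Baire space. -/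

import Mathlib

open TopologicalSpace Set
open scoped ENNReal

noncomputable section

/-- Euclidean space `ℝ^n`. -/
abbrev Euc (n : ℕ) : Type := EuclideanSpace ℝ (Fin n)

/-- The `α`-Hölder seminorm of `f` over the set `A`, valued in `[0,∞]`. -/
noncomputable def holderSemi {E F : Type*} [NormedAddCommGroup E] [NormedAddCommGroup F]
    (α : ℝ) (A : Set E) (f : E → F) : ℝ≥0∞ :=
  ⨆ (x) (_ : x ∈ A) (y) (_ : y ∈ A) (_ : x ≠ y),
    ENNReal.ofReal (‖f x - f y‖ / ‖x - y‖ ^ α)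

/-- Maps `ℝ^m → ℝ^d` of class `C^k` with `[D^k f]_{α,K} < ∞` for every compact `K`. -/
abbrev CkHolderMap (m d k : ℕ) (α : ℝ) : Type :=
  {f : Euc m → Euc d // ContDiff ℝ (k : ℕ∞) f ∧
    ∀ K : Set (Euc m), IsCompact K → holderSemi α K (iteratedFDeriv ℝ k f) < ⊤}

/-- The `C^{k+α}` norm over a compact set `K`:
`‖f‖_{k+α,K} = sup_{x∈K} ‖f x‖ + max_{1≤j≤k} sup_{x∈K} ‖D^j f x‖ + [D^k f]_{α,K}`,
valued in `[0,∞]`. -/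
noncomputable def ckHolderNorm (m d k : ℕ) (α : ℝ) (K : Set (Euc m))
    (f : Euc m → Euc d) : ℝ≥0∞ :=
  (⨆ (x) (_ : x ∈ K), ENNReal.ofReal ‖f x‖)
    + (⨆ j ∈ Finset.Icc 1 k, ⨆ (x) (_ : x ∈ K), ENNReal.ofReal ‖iteratedFDeriv ℝ j f x‖)
    + holderSemi α K (iteratedFDeriv ℝ k f)

/-- Generating sets of the strong `C^{k+α}`-Whitney topology: indexed by a locally finite
family of compact sets `K_t` and extended positive reals `ε_t`. -/
def strongBasicCk (m d k : ℕ) (α : ℝ) : Set (Set (CkHolderMap m d k α)) :=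
  { S | ∃ (T : Type) (K : T → Set (Euc m)) (ε : T → ℝ≥0∞) (f : CkHolderMap m d k α),
      (∀ t, IsCompact (K t)) ∧ LocallyFinite K ∧ (∀ t, 0 < ε t) ∧
      S = { g | ∀ t, ckHolderNorm m d k α (K t) (f.1 - g.1) < ε t } }

/-!
The proof of Baire's theorem for complete metric spaces goes through, with the closed sets
`{g | ‖f - g‖_{k+α,K_t} ≤ ε_t for all t}` in place of closed balls. Given dense open sets `U_n`
and a nonempty open `W`, choose nested such sets `C_n ⊆ W ∩ U_0 ∩ ⋯ ∩ U_n` with nonempty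
interior, where `C_n` moreover prescribes accuracy `2⁻ⁿ` on the ball `B(0, n)`: this is possible
because a locally finite family of compact sets stays locally finite when one set is added. The
centres of the `C_n` then converge in `C^k` locally uniformly; since `‖·‖_{k+α,K}` is lower
semicontinuous under pointwise convergence of the derivatives up to order `k`, the limit has
locally finite Hölder seminorm and lies in every `C_n`.
-/

open Filter Metric
open scoped NNReal Topology

theorem baireSpace_of_nested {X : Type*} [TopologicalSpace X] (P : ℕ → Set X → Prop)
    (exists_subset : ∀ n (O : Set X), IsOpen O → O.Nonempty →
      ∃ C ⊆ O, P n C ∧ (interior C).Nonempty)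
    (nonempty_iInter : ∀ C : ℕ → Set X, (∀ n, P n (C n)) → Antitone C → (⋂ n, C n).Nonempty) :
    BaireSpace X := by
  refine ⟨fun U hUo hUd => dense_iff_inter_open.2 fun W hW hWne => ?_⟩
  obtain ⟨C₀, hC₀, hPC₀, hintC₀⟩ :=
    exists_subset 0 _ (hW.inter (hUo 0)) ((hUd 0).inter_open_nonempty W hW hWne)
  have step : ∀ n (C : Set X), (interior C).Nonempty →
      ∃ C' ⊆ interior C ∩ U (n + 1), P (n + 1) C' ∧ (interior C').Nonempty := fun n C hC =>
    exists_subset (n + 1) _ (isOpen_interior.inter (hUo _))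
      ((hUd _).inter_open_nonempty _ isOpen_interior hC)
  choose! next hnext_sub hnext_P hnext_int using step
  let C : ℕ → Set X := fun n => Nat.rec C₀ next n
  have hC : ∀ n, (interior (C n)).Nonempty ∧ P n (C n) ∧ C n ⊆ U n := by
    intro n
    induction n with
    | zero => exact ⟨hintC₀, hPC₀, hC₀.trans inter_subset_right⟩
    | succ n ih =>
      exact ⟨hnext_int n _ ih.1, hnext_P n _ ih.1, (hnext_sub n _ ih.1).trans inter_subset_right⟩
  have hanti : Antitone C := antitone_nat_of_succ_le fun n =>
    (hnext_sub n _ (hC n).1).trans (inter_subset_left.trans interior_subset)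
  obtain ⟨x, hx⟩ := nonempty_iInter C (fun n => (hC n).2.1) hanti
  rw [mem_iInter] at hx
  exact ⟨x, (hC₀ (hx 0)).1, mem_iInter.2 fun n => (hC n).2.2 (hx n)⟩

theorem ENNReal.le_liminf_add {u v : ℕ → ℝ≥0∞} :
    liminf u atTop + liminf v atTop ≤ liminf (fun j => u j + v j) atTop := by
  have hmono : ∀ w : ℕ → ℝ≥0∞, Monotone fun n => ⨅ i ≥ n, w i := fun w a b hab =>
    le_iInf₂ fun i hi => iInf₂_le i (hab.trans hi)
  simp only [liminf_eq_iSup_iInf_of_nat]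
  rw [ENNReal.iSup_add_iSup_of_monotone (hmono u) (hmono v)]
  exact iSup_mono fun n => le_iInf₂ fun i hi =>
    add_le_add (iInf₂_le i hi) (iInf₂_le i hi)

theorem le_liminf_of_tendsto_of_le {ι : Type*} {l : Filter ι} [l.NeBot] {u w : ι → ℝ≥0∞}
    {a : ℝ≥0∞} (hu : Tendsto u l (𝓝 a)) (h : ∀ j, u j ≤ w j) : a ≤ liminf w l :=
  hu.liminf_eq ▸ liminf_le_liminf (Eventually.of_forall h)

theorem exists_tendstoLocallyUniformly_of_dist_le {E Y : Type*} [SeminormedAddCommGroup E]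
    [PseudoMetricSpace Y] [CompleteSpace Y] {F : ℕ → E → Y} {r : ℕ → ℝ}
    (hr : Tendsto r atTop (𝓝 0))
    (h : ∀ n j : ℕ, n ≤ j → ∀ x ∈ closedBall (0 : E) n, dist (F n x) (F j x) ≤ r n) :
    ∃ G : E → Y, TendstoLocallyUniformly F G atTop := by
  have hsmall : ∀ (R : ℝ) (ε : ℝ), 0 < ε → ∀ᶠ n : ℕ in atTop, r n < ε ∧ R ≤ n := fun R ε hε =>
    (hr.eventually (gt_mem_nhds hε)).and (tendsto_natCast_atTop_atTop.eventually_ge_atTop R)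
  have hcauchy : ∀ x, CauchySeq fun j => F j x := fun x =>
    Metric.cauchySeq_iff'.2 fun ε hε =>
      let ⟨N, hN, hxN⟩ := (hsmall ‖x‖ ε hε).exists
      ⟨N, fun j hj => (dist_comm _ _).trans_lt
        ((h N j hj x (mem_closedBall_zero_iff.2 hxN)).trans_lt hN)⟩
  choose G hG using fun x => cauchySeq_tendsto_of_complete (hcauchy x)
  have hdist : ∀ n : ℕ, ∀ x ∈ closedBall (0 : E) n, dist (F n x) (G x) ≤ r n := fun n x hx =>
    le_of_tendsto (tendsto_const_nhds.dist (hG x))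
      (eventually_atTop.2 ⟨n, fun j hj => h n j hj x hx⟩)
  refine ⟨G, tendstoLocallyUniformly_of_forall_exists_nhds fun x =>
    ⟨closedBall 0 (‖x‖ + 1), closedBall_mem_nhds_of_mem ?_, ?_⟩⟩
  · simp
  · refine Metric.tendstoUniformlyOn_iff.2 fun ε hε => ?_
    filter_upwards [hsmall (‖x‖ + 1) ε hε] with n ⟨hn, hRn⟩ y hy
    rw [dist_comm]
    exact (hdist n y (closedBall_subset_closedBall hRn hy)).trans_lt hn

theorem iteratedFDeriv_sub_apply_of_le {𝕜 E F : Type*} [NontriviallyNormedField 𝕜]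
    [NormedAddCommGroup E] [NormedSpace 𝕜 E] [NormedAddCommGroup F] [NormedSpace 𝕜 F]
    {n : ℕ} {u v : E → F} (hu : ContDiff 𝕜 (n : ℕ∞) u) (hv : ContDiff 𝕜 (n : ℕ∞) v) {l : ℕ}
    (hl : l ≤ n)
    (x : E) : iteratedFDeriv 𝕜 l (u - v) x = iteratedFDeriv 𝕜 l u x - iteratedFDeriv 𝕜 l v x :=
  iteratedFDeriv_sub_apply (hu.of_le (by exact_mod_cast hl)).contDiffAt
    (hv.of_le (by exact_mod_cast hl)).contDiffAt

theorem hasFTaylorSeriesUpTo_of_tendstoLocallyUniformly {𝕜 E F : Type*}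
    [NontriviallyNormedField 𝕜] [IsRCLikeNormedField 𝕜]
    [NormedAddCommGroup E] [NormedSpace 𝕜 E] [NormedAddCommGroup F] [NormedSpace 𝕜 F]
    {n : ℕ} {f : ℕ → E → F} {P : E → FormalMultilinearSeries 𝕜 E F}
    (hf : ∀ j, ContDiff 𝕜 n (f j))
    (hP : ∀ l ≤ n, TendstoLocallyUniformly (fun j x => iteratedFDeriv 𝕜 l (f j) x)
      (fun x => P x l) atTop) :
    HasFTaylorSeriesUpTo n (fun x => (P x 0).curry0) P where
  zero_eq _ := rfl
  fderiv l hl x := by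
    have hl : l < n := by exact_mod_cast hl
    have hcurry : TendstoLocallyUniformly
        (fun j y => (iteratedFDeriv 𝕜 (l + 1) (f j) y).curryLeft)
        (fun y => (P y (l + 1)).curryLeft) atTop :=
      (continuousMultilinearCurryLeftEquiv 𝕜 (fun _ : Fin (l + 1) => E) F).isometry
        |>.uniformContinuous.comp_tendstoLocallyUniformly (hP (l + 1) hl)
    exact hasFDerivAt_of_tendstoLocallyUniformlyOn isOpen_univ
      (tendstoLocallyUniformlyOn_univ.2 hcurry)
      (fun j y _ => (hf j).ftaylorSeries.fderiv l (by exact_mod_cast hl) y)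
      (fun y _ => (hP l hl.le).tendstoLocallyUniformlyOn.tendsto_at (mem_univ y)) (mem_univ x)
  cont l hl := (hP l (by exact_mod_cast hl)).continuous
    (Eventually.of_forall fun j => (hf j).continuous_iteratedFDeriv hl).frequently

section HolderSemi

variable {E F : Type*} [NormedAddCommGroup E] [NormedAddCommGroup F]
  {α : ℝ} {A B : Set E} {f g : E → F}

theorem holderSemi_le_iff {c : ℝ≥0∞} : holderSemi α A f ≤ c ↔
    ∀ x ∈ A, ∀ y ∈ A, x ≠ y → ENNReal.ofReal (‖f x - f y‖ / ‖x - y‖ ^ α) ≤ c := by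
  simp only [holderSemi, iSup_le_iff]

theorem le_holderSemi {x y : E} (hx : x ∈ A) (hy : y ∈ A) (hxy : x ≠ y) :
    ENNReal.ofReal (‖f x - f y‖ / ‖x - y‖ ^ α) ≤ holderSemi α A f :=
  holderSemi_le_iff.1 le_rfl x hx y hy hxy

theorem holderSemi_mono (hAB : A ⊆ B) : holderSemi α A f ≤ holderSemi α B f :=
  holderSemi_le_iff.2 fun _x hx _y hy hxy => le_holderSemi (hAB hx) (hAB hy) hxy

theorem holderSemi_le_add_of_norm_sub_le {g₁ g₂ : E → F}
    (h : ∀ x y, ‖f x - f y‖ ≤ ‖g₁ x - g₁ y‖ + ‖g₂ x - g₂ y‖) :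
    holderSemi α A f ≤ holderSemi α A g₁ + holderSemi α A g₂ := by
  refine holderSemi_le_iff.2 fun x hx y hy hxy => ?_
  calc ENNReal.ofReal (‖f x - f y‖ / ‖x - y‖ ^ α)
      ≤ ENNReal.ofReal (‖g₁ x - g₁ y‖ / ‖x - y‖ ^ α + ‖g₂ x - g₂ y‖ / ‖x - y‖ ^ α) := by
        rw [← add_div]; gcongr; exact h x y
    _ ≤ _ := ENNReal.ofReal_add_le.trans (add_le_add (le_holderSemi hx hy hxy)
        (le_holderSemi hx hy hxy))

theorem holderSemi_add_le : holderSemi α A (f + g) ≤ holderSemi α A f + holderSemi α A g :=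
  holderSemi_le_add_of_norm_sub_le fun x y => by
    simpa only [Pi.add_apply, add_sub_add_comm] using norm_add_le (f x - f y) (g x - g y)

theorem holderSemi_sub_le : holderSemi α A (f - g) ≤ holderSemi α A f + holderSemi α A g :=
  holderSemi_le_add_of_norm_sub_le fun x y => by
    simpa only [Pi.sub_apply, sub_sub_sub_comm] using norm_sub_le (f x - f y) (g x - g y)

theorem holderSemi_le_liminf {φ : ℕ → E → F}
    (h : ∀ x ∈ A, Tendsto (fun j => φ j x) atTop (𝓝 (f x))) :
    holderSemi α A f ≤ liminf (fun j => holderSemi α A (φ j)) atTop :=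
  holderSemi_le_iff.2 fun x hx y hy hxy => le_liminf_of_tendsto_of_le
    (ENNReal.tendsto_ofReal ((((h x hx).sub (h y hy)).norm).div_const _))
    fun _ => le_holderSemi hx hy hxy

end HolderSemi

section CkHolderNorm

variable {m d k : ℕ} {α : ℝ} {K : Set (Euc m)} {u v : Euc m → Euc d}

theorem ofReal_norm_iteratedFDeriv_le_ckHolderNorm {l : ℕ} (hl : l ≤ k) {x : Euc m}
    (hx : x ∈ K) :
    ENNReal.ofReal ‖iteratedFDeriv ℝ l u x‖ ≤ ckHolderNorm m d k α K u := by
  unfold ckHolderNorm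
  refine le_add_right ?_
  rcases Nat.eq_zero_or_pos l with rfl | hl0
  · rw [norm_iteratedFDeriv_zero]
    exact le_add_right (le_iSup₂_of_le x hx le_rfl)
  · exact le_add_left
      (le_iSup₂_of_le l (Finset.mem_Icc.2 ⟨hl0, hl⟩) (le_iSup₂_of_le x hx le_rfl))

theorem holderSemi_le_ckHolderNorm :
    holderSemi α K (iteratedFDeriv ℝ k u) ≤ ckHolderNorm m d k α K u :=
  le_add_self

@[simp]
theorem ckHolderNorm_zero : ckHolderNorm m d k α K 0 = 0 := by
  simp [ckHolderNorm, holderSemi]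

theorem ckHolderNorm_add_le (hu : ContDiff ℝ (k : ℕ∞) u) (hv : ContDiff ℝ (k : ℕ∞) v) :
    ckHolderNorm m d k α K (u + v) ≤ ckHolderNorm m d k α K u + ckHolderNorm m d k α K v := by
  have hD : ∀ l ≤ k, iteratedFDeriv ℝ l (u + v) = iteratedFDeriv ℝ l u + iteratedFDeriv ℝ l v :=
    fun l hl =>
      iteratedFDeriv_add (hu.of_le (by exact_mod_cast hl)) (hv.of_le (by exact_mod_cast hl))
  have hval : ⨆ x ∈ K, ENNReal.ofReal ‖(u + v) x‖ ≤
      (⨆ x ∈ K, ENNReal.ofReal ‖u x‖) + ⨆ x ∈ K, ENNReal.ofReal ‖v x‖ :=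
    iSup₂_le fun x hx => (ENNReal.ofReal_le_ofReal (norm_add_le _ _)).trans
      (ENNReal.ofReal_add_le.trans
        (add_le_add (le_iSup₂_of_le x hx le_rfl) (le_iSup₂_of_le x hx le_rfl)))
  have hder : ⨆ j ∈ Finset.Icc 1 k, ⨆ x ∈ K, ENNReal.ofReal ‖iteratedFDeriv ℝ j (u + v) x‖ ≤
      (⨆ j ∈ Finset.Icc 1 k, ⨆ x ∈ K, ENNReal.ofReal ‖iteratedFDeriv ℝ j u x‖) +
        ⨆ j ∈ Finset.Icc 1 k, ⨆ x ∈ K, ENNReal.ofReal ‖iteratedFDeriv ℝ j v x‖ :=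
    iSup₂_le fun j hj => iSup₂_le fun x hx => by
      rw [hD j (Finset.mem_Icc.1 hj).2]
      exact (ENNReal.ofReal_le_ofReal (norm_add_le _ _)).trans (ENNReal.ofReal_add_le.trans
        (add_le_add (le_iSup₂_of_le j hj (le_iSup₂_of_le x hx le_rfl))
          (le_iSup₂_of_le j hj (le_iSup₂_of_le x hx le_rfl))))
  have hhol : holderSemi α K (iteratedFDeriv ℝ k (u + v)) ≤
      holderSemi α K (iteratedFDeriv ℝ k u) + holderSemi α K (iteratedFDeriv ℝ k v) := by
    rw [hD k le_rfl]; exact holderSemi_add_le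
  calc ckHolderNorm m d k α K (u + v)
      ≤ _ + _ + _ := add_le_add (add_le_add hval hder) hhol
    _ = ckHolderNorm m d k α K u + ckHolderNorm m d k α K v := by
      simp only [ckHolderNorm]; ring

theorem ckHolderNorm_le_liminf {φ : ℕ → Euc m → Euc d}
    (h : ∀ l ≤ k, ∀ x ∈ K, Tendsto (fun j => iteratedFDeriv ℝ l (φ j) x) atTop
      (𝓝 (iteratedFDeriv ℝ l u x))) :
    ckHolderNorm m d k α K u ≤ liminf (fun j => ckHolderNorm m d k α K (φ j)) atTop := by
  have hval : ⨆ x ∈ K, ENNReal.ofReal ‖u x‖ ≤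
      liminf (fun j => ⨆ x ∈ K, ENNReal.ofReal ‖φ j x‖) atTop :=
    iSup₂_le fun x hx => le_liminf_of_tendsto_of_le
      (ENNReal.tendsto_ofReal (by simpa only [norm_iteratedFDeriv_zero] using
        (h 0 (Nat.zero_le k) x hx).norm))
      fun j => le_iSup₂_of_le x hx le_rfl
  have hder : ⨆ l ∈ Finset.Icc 1 k, ⨆ x ∈ K, ENNReal.ofReal ‖iteratedFDeriv ℝ l u x‖ ≤
      liminf (fun j => ⨆ l ∈ Finset.Icc 1 k, ⨆ x ∈ K,
        ENNReal.ofReal ‖iteratedFDeriv ℝ l (φ j) x‖) atTop :=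
    iSup₂_le fun l hl => iSup₂_le fun x hx => le_liminf_of_tendsto_of_le
      (ENNReal.tendsto_ofReal (h l (Finset.mem_Icc.1 hl).2 x hx).norm)
      fun j => le_iSup₂_of_le l hl (le_iSup₂_of_le x hx le_rfl)
  unfold ckHolderNorm
  exact (add_le_add (add_le_add hval hder) (holderSemi_le_liminf (h k le_rfl))).trans
    ((add_le_add ENNReal.le_liminf_add le_rfl).trans ENNReal.le_liminf_add)

end CkHolderNorm

section WhitneyTopology

variable {m d k : ℕ} {α : ℝ}

def ckBall (f : Euc m → Euc d) {T : Type} (K : T → Set (Euc m)) (ε : T → ℝ≥0∞) :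
    Set (CkHolderMap m d k α) :=
  {g | ∀ t, ckHolderNorm m d k α (K t) (f - g.1) < ε t}

def ckClosedBall (f : Euc m → Euc d) {T : Type} (K : T → Set (Euc m)) (ε : T → ℝ≥0∞) :
    Set (CkHolderMap m d k α) :=
  {g | ∀ t, ckHolderNorm m d k α (K t) (f - g.1) ≤ ε t}

def IsWhitneyFamily {T : Type} (K : T → Set (Euc m)) (ε : T → ℝ≥0∞) : Prop :=
  (∀ t, IsCompact (K t)) ∧ LocallyFinite K ∧ ∀ t, 0 < ε t

theorem IsWhitneyFamily.sumElim {T₁ T₂ : Type} {K₁ : T₁ → Set (Euc m)} {K₂ : T₂ → Set (Euc m)}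
    {ε₁ : T₁ → ℝ≥0∞} {ε₂ : T₂ → ℝ≥0∞} (h₁ : IsWhitneyFamily K₁ ε₁) (h₂ : IsWhitneyFamily K₂ ε₂) :
    IsWhitneyFamily (Sum.elim K₁ K₂) (Sum.elim ε₁ ε₂) :=
  ⟨Sum.forall.2 ⟨h₁.1, h₂.1⟩, h₁.2.1.sumElim h₂.2.1, Sum.forall.2 ⟨h₁.2.2, h₂.2.2⟩⟩

variable {T : Type} {K : T → Set (Euc m)} {ε : T → ℝ≥0∞}

theorem ckBall_mem_strongBasicCk (h : IsWhitneyFamily K ε) (f : CkHolderMap m d k α) :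
    ckBall f.1 K ε ∈ strongBasicCk m d k α :=
  ⟨T, K, ε, f, h.1, h.2.1, h.2.2, rfl⟩

theorem mem_ckBall_self (hε : ∀ t, 0 < ε t) (f : CkHolderMap m d k α) :
    f ∈ ckBall f.1 K ε := fun t => by
  simpa only [sub_self, ckHolderNorm_zero] using hε t

theorem mem_ckClosedBall_self (f : CkHolderMap m d k α) : f ∈ ckClosedBall f.1 K ε := fun t => by
  simp only [sub_self, ckHolderNorm_zero, zero_le]

theorem ckBall_subset_ckClosedBall {f : Euc m → Euc d} :
    (ckBall f K ε : Set (CkHolderMap m d k α)) ⊆ ckClosedBall f K ε :=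
  fun _ hg t => (hg t).le

theorem exists_ckBall_subset_of_mem_strongBasicCk {S : Set (CkHolderMap m d k α)}
    (hS : S ∈ strongBasicCk m d k α) {x : CkHolderMap m d k α} (hx : x ∈ S) :
    ∃ (T : Type) (K : T → Set (Euc m)) (δ : T → ℝ≥0∞),
      IsWhitneyFamily K δ ∧ ckBall x.1 K δ ⊆ S := by
  obtain ⟨T, K, ε, f, hK, hLF, -, rfl⟩ := hS
  refine ⟨T, K, fun t => ε t - ckHolderNorm m d k α (K t) (f.1 - x.1),
    ⟨hK, hLF, fun t => tsub_pos_of_lt (hx t)⟩, fun g hg t => ?_⟩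
  calc ckHolderNorm m d k α (K t) (f.1 - g.1)
      ≤ ckHolderNorm m d k α (K t) (f.1 - x.1) + ckHolderNorm m d k α (K t) (x.1 - g.1) := by
        rw [← sub_add_sub_cancel f.1 x.1 g.1]
        exact ckHolderNorm_add_le (f.2.1.sub x.2.1) (x.2.1.sub g.2.1)
    _ < ckHolderNorm m d k α (K t) (f.1 - x.1)
          + (ε t - ckHolderNorm m d k α (K t) (f.1 - x.1)) :=
        ENNReal.add_lt_add_left ((hx t).trans_le le_top).ne (hg t)
    _ = ε t := add_tsub_cancel_of_le (hx t).le

theorem isTopologicalBasis_strongBasicCk :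
    @IsTopologicalBasis (CkHolderMap m d k α) (generateFrom (strongBasicCk m d k α))
      (strongBasicCk m d k α) := by
  let := generateFrom (strongBasicCk m d k α)
  refine ⟨fun S₁ hS₁ S₂ hS₂ x hx => ?_, ?_, rfl⟩
  · obtain ⟨T₁, K₁, δ₁, h₁, hsub₁⟩ := exists_ckBall_subset_of_mem_strongBasicCk hS₁ hx.1
    obtain ⟨T₂, K₂, δ₂, h₂, hsub₂⟩ := exists_ckBall_subset_of_mem_strongBasicCk hS₂ hx.2
    refine ⟨_, ckBall_mem_strongBasicCk (h₁.sumElim h₂) x, mem_ckBall_self (h₁.sumElim h₂).2.2 x,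
      fun g hg => ⟨hsub₁ fun t => hg (Sum.inl t), hsub₂ fun t => hg (Sum.inr t)⟩⟩
  · refine sUnion_eq_univ_iff.2 fun x => ⟨_, ckBall_mem_strongBasicCk (K := Empty.elim)
      (ε := Empty.elim) ⟨Empty.rec, locallyFinite_of_finite _, Empty.rec⟩ x,
      mem_ckBall_self Empty.rec x⟩

end WhitneyTopology

section Baire

variable {m d k : ℕ} {α : ℝ}

theorem exists_contDiff_ckHolderNorm_le_liminf {f : ℕ → Euc m → Euc d}
    (hf : ∀ j, ContDiff ℝ (k : ℕ∞) (f j)) {r : ℕ → ℝ≥0} (hr : Tendsto r atTop (𝓝 0))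
    (h : ∀ n j : ℕ, n ≤ j → ckHolderNorm m d k α (closedBall 0 n) (f n - f j) ≤ r n) :
    ∃ g, ContDiff ℝ (k : ℕ∞) g ∧ ∀ n K, ckHolderNorm m d k α K (f n - g) ≤
      liminf (fun j => ckHolderNorm m d k α K (f n - f j)) atTop := by
  have hΦ : ∀ l ≤ k, ∃ Φ : Euc m → ContinuousMultilinearMap ℝ (fun _ : Fin l => Euc m) (Euc d),
      TendstoLocallyUniformly (fun j x => iteratedFDeriv ℝ l (f j) x) Φ atTop :=
    fun l hl => exists_tendstoLocallyUniformly_of_dist_le (NNReal.tendsto_coe.2 hr)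
      fun n j hnj x hx => by
        rw [dist_eq_norm, ← iteratedFDeriv_sub_apply_of_le (hf n) (hf j) hl]
        simpa using (ENNReal.ofReal_le_iff_le_toReal ENNReal.coe_ne_top).1
          ((ofReal_norm_iteratedFDeriv_le_ckHolderNorm (α := α) hl hx).trans (h n j hnj))
  choose! Φ hΦ using hΦ
  have hP := hasFTaylorSeriesUpTo_of_tendstoLocallyUniformly hf
    (P := fun x l => Φ l x) (by exact_mod_cast hΦ)
  refine ⟨_, hP.contDiff, fun n K => ckHolderNorm_le_liminf fun l hl x _ => ?_⟩
  simp_rw [iteratedFDeriv_sub_apply_of_le (hf n) (hf _) hl,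
    iteratedFDeriv_sub_apply_of_le (hf n) hP.contDiff hl, ← hP.eq_iteratedFDeriv
      (by exact_mod_cast hl)]
  exact tendsto_const_nhds.sub ((hΦ l hl).tendstoLocallyUniformlyOn.tendsto_at (mem_univ x))

theorem exists_ckHolderNorm_le_liminf (f : ℕ → CkHolderMap m d k α) {r : ℕ → ℝ≥0}
    (hr : Tendsto r atTop (𝓝 0))
    (h : ∀ n j : ℕ, n ≤ j → ckHolderNorm m d k α (closedBall 0 n) ((f n).1 - (f j).1) ≤ r n) :
    ∃ g : CkHolderMap m d k α, ∀ n K, ckHolderNorm m d k α K ((f n).1 - g.1) ≤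
      liminf (fun j => ckHolderNorm m d k α K ((f n).1 - (f j).1)) atTop := by
  obtain ⟨g, hg, hlim⟩ := exists_contDiff_ckHolderNorm_le_liminf (fun j => (f j).2.1) hr h
  refine ⟨⟨g, hg, fun K hK => ?_⟩, hlim⟩
  obtain ⟨R, hKR⟩ := hK.isBounded.subset_closedBall 0
  obtain ⟨n, hRn⟩ := exists_nat_ge R
  have hKn : K ⊆ closedBall 0 n := hKR.trans (closedBall_subset_closedBall hRn)
  have hfinite : ckHolderNorm m d k α (closedBall 0 n) ((f n).1 - g) < ⊤ :=
    (hlim n _).trans_lt <| (liminf_le_of_frequently_le'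
      (eventually_atTop.2 ⟨n, h n⟩).frequently).trans_lt ENNReal.coe_lt_top
  calc holderSemi α K (iteratedFDeriv ℝ k g)
      = holderSemi α K (iteratedFDeriv ℝ k (f n).1 - iteratedFDeriv ℝ k ((f n).1 - g)) := by
        congr 1; ext1 x
        rw [Pi.sub_apply, iteratedFDeriv_sub_apply_of_le (f n).2.1 hg le_rfl, sub_sub_cancel]
    _ ≤ holderSemi α K (iteratedFDeriv ℝ k (f n).1)
          + holderSemi α K (iteratedFDeriv ℝ k ((f n).1 - g)) := holderSemi_sub_le
    _ < ⊤ := ENNReal.add_lt_top.2 ⟨(f n).2.2 K hK, (holderSemi_mono hKn).trans_lt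
        (holderSemi_le_ckHolderNorm.trans_lt hfinite)⟩

def IsLevelClosedBall (n : ℕ) (C : Set (CkHolderMap m d k α)) : Prop :=
  ∃ (T : Type) (K : T → Set (Euc m)) (ε : T → ℝ≥0∞) (f : CkHolderMap m d k α),
    C = ckClosedBall f.1 K ε ∧ ∃ t, K t = closedBall 0 n ∧ ε t ≤ ((2⁻¹ ^ n : ℝ≥0) : ℝ≥0∞)

theorem nonempty_iInter_of_isLevelClosedBall {C : ℕ → Set (CkHolderMap m d k α)}
    (hC : ∀ n, IsLevelClosedBall n (C n)) (hanti : Antitone C) : (⋂ n, C n).Nonempty := by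
  choose T K ε f hCeq t hKt hεt using hC
  have hmem : ∀ n j, n ≤ j → ∀ s, ckHolderNorm m d k α (K n s) ((f n).1 - (f j).1) ≤ ε n s :=
    fun n j hnj => by
      have := hanti hnj (hCeq j ▸ mem_ckClosedBall_self (f j))
      rwa [hCeq n] at this
  obtain ⟨g, hg⟩ := exists_ckHolderNorm_le_liminf f
    (NNReal.tendsto_pow_atTop_nhds_zero_of_lt_one (by norm_num)) fun n j hnj =>
      hKt n ▸ (hmem n j hnj (t n)).trans (hεt n)
  refine ⟨g, mem_iInter.2 fun n => hCeq n ▸ fun s => (hg n _).trans ?_⟩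
  exact liminf_le_of_frequently_le' (eventually_atTop.2 ⟨n, fun j hj => hmem n j hj s⟩).frequently

theorem exists_isLevelClosedBall_subset (n : ℕ) {O : Set (CkHolderMap m d k α)}
    (hO : IsOpen[generateFrom (strongBasicCk m d k α)] O) (hne : O.Nonempty) :
    ∃ C ⊆ O, IsLevelClosedBall n C ∧
      (@interior _ (generateFrom (strongBasicCk m d k α)) C).Nonempty := by
  let := generateFrom (strongBasicCk m d k α)
  obtain ⟨x, hx⟩ := hne
  obtain ⟨S, hS, hxS, hSO⟩ := isTopologicalBasis_strongBasicCk.exists_subset_of_mem_open hx hO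
  obtain ⟨T, K, δ, hKδ, hsub⟩ := exists_ckBall_subset_of_mem_strongBasicCk hS hxS
  -- `δ t` may be `∞`, whose half is not smaller
  have hhalf : ∀ t, min (δ t) 1 / 2 < δ t := fun t =>
    (ENNReal.half_lt_self (lt_min (hKδ.2.2 t) one_pos).ne'
      (min_le_right _ _ |>.trans_lt ENNReal.one_lt_top).ne).trans_le (min_le_left _ _)
  let K' := Sum.elim K fun _ : Unit => closedBall (0 : Euc m) n
  let ε' := Sum.elim (fun t => min (δ t) 1 / 2) fun _ : Unit => ((2⁻¹ ^ n : ℝ≥0) : ℝ≥0∞)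
  have hK'ε' : IsWhitneyFamily K' ε' := IsWhitneyFamily.sumElim
    ⟨hKδ.1, hKδ.2.1, fun t => (ENNReal.half_pos (lt_min (hKδ.2.2 t) one_pos).ne')⟩
    ⟨fun _ => isCompact_closedBall _ _, locallyFinite_of_finite _, fun _ => by positivity⟩
  have hsubO : ckClosedBall x.1 K' ε' ⊆ O := fun g hg =>
    hSO (hsub fun t => (hg (Sum.inl t)).trans_lt (hhalf t))
  have hx_int : x ∈ interior (ckClosedBall x.1 K' ε') := mem_interior.2
    ⟨ckBall x.1 K' ε', ckBall_subset_ckClosedBall,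
      isOpen_generateFrom_of_mem (ckBall_mem_strongBasicCk hK'ε' x), mem_ckBall_self hK'ε'.2.2 x⟩
  exact ⟨_, hsubO, ⟨_, K', ε', x, rfl, Sum.inr (), rfl, le_rfl⟩, x, hx_int⟩

end Baire

theorem statement2_general (m d k : ℕ) (α : ℝ) :
    @BaireSpace (CkHolderMap m d k α) (generateFrom (strongBasicCk m d k α)) :=
  @baireSpace_of_nested _ (generateFrom _) IsLevelClosedBall
    (fun n _ hO hne => exists_isLevelClosedBall_subset n hO hne)
    fun _ hC hanti => nonempty_iInter_of_isLevelClosedBall hC hanti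

/-- the space of `C^k` maps `ℝ^m → ℝ^d` whose `k`-th derivative has locally
finite `α`-Hölder seminorm, endowed with the strong `C^{k+α}`-Whitney topology,
is a Baire space. -/
theorem statement2 (m d k : ℕ) (hm : 1 ≤ m) (hd : 1 ≤ d) (hk : 1 ≤ k)
    (α : ℝ) (hα : α ∈ Set.Ioc (0:ℝ) 1) :
    @BaireSpace (CkHolderMap m d k α) (generateFrom (strongBasicCk m d k α)) :=
  statement2_general m d k α
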